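/- Let u(μ) = Σ_{k=0}^∞ ((1/2)_k / k!)³ (64μ)^k, an analytic function on the complex disk |μ| < 1/64. Then u satisfies the Picard–Fuchs differential equation μ²(64μ − 1)u‴(μ) + μ(288μ − 3)u″(μ) + (208μ − 1)u′(μ) + 8u(μ) = 0 for all complex μ with |μ| < 1/64. -/

import Mathlib

/-- Pochhammer symbol `(a)_k = a(a+1)⋯(a+k−1)` over `ℂ`. -/
noncomputable def pochC (a : ℂ) (k : ℕ) : ℂ := ∏ i ∈ Finset.range k, (a + i)

/-- `u(μ) = Σ_{k≥0} ((1/2)_k / k!)³ (64μ)^k`, analytic on `|μ| < 1/64`. -/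
noncomputable def u (μ : ℂ) : ℂ :=
  ∑' k : ℕ, (pochC (1/2) k / (Nat.factorial k : ℂ)) ^ 3 * (64 * μ) ^ k

/-!
Write `u = ∑ cₖ μᵏ` with `cₖ = ((1/2)ₖ / k!)³ 64ᵏ`, so that `(k+1)³ cₖ₊₁ = 8 (2k+1)³ cₖ` and
`|cₖ| ≤ 64ᵏ`; the bound justifies termwise differentiation on `|μ| < 1/64`. Since
`μʲ u⁽ʲ⁾ = ∑ k(k-1)⋯(k-j+1) cₖ μᵏ`, the two halves of the equation are
`64μ³u‴ + 288μ²u″ + 208μu′ + 8u = ∑ 8(2k+1)³ cₖ μᵏ` and `μ²u‴ + 3μu″ + u′ = ∑ (k+1)³ cₖ₊₁ μᵏ`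
(the equation is `θ³u = 8μ(2θ+1)³u`, `θ = μ d/dμ`, divided by `-μ`), and the recurrence makes
the two series equal term by term.
-/

open Topology

noncomputable def powerSeriesSum (a : ℕ → ℂ) (z : ℂ) : ℂ := ∑' k, a k * z ^ k

def derivCoeff (a : ℕ → ℂ) (k : ℕ) : ℂ := (k + 1) * a (k + 1)

/-- The binomial weight (rather than `(k + 1) ^ m`) makes the class closed under `derivCoeff`
on the nose. -/
def PolyGeomBounded (R : ℝ) (a : ℕ → ℂ) : Prop :=
  ∃ C : ℝ, ∃ m : ℕ, ∀ k, ‖a k‖ ≤ C * (k + m).choose m * R ^ k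

theorem iterate_derivCoeff_apply (a : ℕ → ℂ) (j k : ℕ) :
    derivCoeff^[j] a k = (k + j).descFactorial j * a (k + j) := by
  induction j generalizing a with
  | zero => simp
  | succ j ih =>
    rw [Function.iterate_succ_apply, ih, derivCoeff, ← add_assoc, Nat.succ_descFactorial_succ]
    push_cast
    ring

theorem hasSum_descFactorial_mul_pow {a : ℕ → ℂ} {j : ℕ} {z : ℂ}
    (hs : Summable fun k => derivCoeff^[j] a k * z ^ k) :
    HasSum (fun k => (k.descFactorial j : ℂ) * a k * z ^ k)
      (z ^ j * powerSeriesSum (derivCoeff^[j] a) z) := by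
  rw [← hasSum_nat_add_iff' j]
  have hlow : ∑ k ∈ Finset.range j, (k.descFactorial j : ℂ) * a k * z ^ k = 0 :=
    Finset.sum_eq_zero fun k hk => by
      rw [Nat.descFactorial_eq_zero_iff_lt.2 (Finset.mem_range.1 hk)]; simp
  rw [hlow, sub_zero]
  refine (hs.hasSum.mul_left (z ^ j)).congr_fun fun k => ?_
  rw [iterate_derivCoeff_apply, pow_add]
  ring

section

variable {R : ℝ} {a : ℕ → ℂ}

namespace PolyGeomBounded

theorem derivCoeff (ha : PolyGeomBounded R a) : PolyGeomBounded R (derivCoeff a) := by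
  obtain ⟨C, m, hC⟩ := ha
  refine ⟨C * R * (m + 1), m + 1, fun k => ?_⟩
  have hchoose :
      ((k + 1 : ℕ) : ℝ) * (k + 1 + m).choose m = (m + 1) * (k + (m + 1)).choose (m + 1) := by
    have h := Nat.choose_succ_right_eq (k + m + 1) m
    rw [show k + m + 1 - m = k + 1 by omega] at h
    rw [show k + 1 + m = k + m + 1 by ring, ← add_assoc]
    norm_cast
    linarith
  calc ‖_root_.derivCoeff a k‖ = ((k + 1 : ℕ) : ℝ) * ‖a (k + 1)‖ := by
        rw [_root_.derivCoeff, norm_mul]; norm_cast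
    _ ≤ ((k + 1 : ℕ) : ℝ) * (C * (k + 1 + m).choose m * R ^ (k + 1)) := by
        gcongr; exact hC (k + 1)
    _ = C * R * (m + 1) * (k + (m + 1)).choose (m + 1) * R ^ k := by
        rw [pow_succ]; linear_combination (C * R * R ^ k) * hchoose

theorem iterate_derivCoeff (ha : PolyGeomBounded R a) (n : ℕ) :
    PolyGeomBounded R (_root_.derivCoeff^[n] a) := by
  induction n with
  | zero => exact ha
  | succ n ih => rw [Function.iterate_succ_apply']; exact ih.derivCoeff

theorem summable_norm_mul_pow (ha : PolyGeomBounded R a) {r : ℝ} (hr : 0 ≤ r) (hrR : r < R⁻¹) :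
    Summable fun k => ‖a k‖ * r ^ k := by
  obtain ⟨C, m, hC⟩ := ha
  have hR : 0 < R := inv_pos.1 (hr.trans_lt hrR)
  have hq : ‖r * R‖ < 1 := by
    rw [Real.norm_of_nonneg (by positivity)]
    calc r * R < R⁻¹ * R := by gcongr
      _ = 1 := inv_mul_cancel₀ hR.ne'
  refine Summable.of_nonneg_of_le (fun k => by positivity) (fun k => ?_)
    ((summable_choose_mul_geometric_of_norm_lt_one m hq).mul_left C)
  calc ‖a k‖ * r ^ k ≤ C * (k + m).choose m * R ^ k * r ^ k := by gcongr; exact hC k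
    _ = C * ((k + m).choose m * (r * R) ^ k) := by ring

theorem summable (ha : PolyGeomBounded R a) {z : ℂ} (hz : ‖z‖ < R⁻¹) :
    Summable fun k => a k * z ^ k :=
  .of_norm <| by simpa [norm_mul, norm_pow] using ha.summable_norm_mul_pow (norm_nonneg z) hz

end PolyGeomBounded

theorem hasDerivAt_powerSeriesSum (ha : PolyGeomBounded R a) {z : ℂ} (hz : ‖z‖ < R⁻¹) :
    HasDerivAt (powerSeriesSum a) (powerSeriesSum (derivCoeff a) z) z := by
  obtain ⟨r, hzr, hrR⟩ := exists_between hz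
  have hr : 0 < r := (norm_nonneg z).trans_lt hzr
  have hderiv : Summable fun n : ℕ => a n * (n * z ^ (n - 1)) := by
    rw [← summable_nat_add_iff 1]
    refine (ha.derivCoeff.summable hz).congr fun k => ?_
    simp only [derivCoeff, Nat.cast_add_one, Nat.add_sub_cancel]
    ring
  have hdom : Summable fun n : ℕ => ‖a n‖ * (n * r ^ (n - 1)) := by
    rw [← summable_nat_add_iff 1]
    refine (ha.derivCoeff.summable_norm_mul_pow hr.le hrR).congr fun k => ?_
    rw [derivCoeff, norm_mul, ← Nat.cast_add_one, Complex.norm_natCast, Nat.add_sub_cancel]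
    ring
  have hseries := hasDerivAt_tsum_of_isPreconnected hdom Metric.isOpen_ball
    (convex_ball 0 r).isPreconnected (g := fun n y => a n * y ^ n)
    (g' := fun n y => a n * (n * y ^ (n - 1)))
    (fun n y _ => (hasDerivAt_pow n y).const_mul (a n))
    (fun n y hy => by
      rw [mem_ball_zero_iff] at hy
      simp only [norm_mul, norm_pow, Complex.norm_natCast]
      gcongr)
    (Metric.mem_ball_self hr) (by simpa using ha.summable (z := 0) (by simpa using hr.trans hrR))
    (mem_ball_zero_iff.2 hzr)
  refine hseries.congr_deriv ?_
  rw [hderiv.tsum_eq_zero_add, powerSeriesSum]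
  simp [derivCoeff, mul_assoc, mul_left_comm]

theorem iteratedDeriv_powerSeriesSum (ha : PolyGeomBounded R a) (n : ℕ) {z : ℂ}
    (hz : ‖z‖ < R⁻¹) :
    iteratedDeriv n (powerSeriesSum a) z = powerSeriesSum (derivCoeff^[n] a) z := by
  induction n generalizing z with
  | zero => rfl
  | succ n ih =>
    have hnear : iteratedDeriv n (powerSeriesSum a) =ᶠ[𝓝 z] powerSeriesSum (derivCoeff^[n] a) :=
      Filter.eventuallyEq_of_mem (isOpen_lt continuous_norm continuous_const |>.mem_nhds hz)
        fun y hy => ih hy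
    rw [iteratedDeriv_succ, hnear.deriv_eq, Function.iterate_succ_apply',
      (hasDerivAt_powerSeriesSum (ha.iterate_derivCoeff n) hz).deriv]

theorem hasSum_descFactorial_mul_pow_iteratedDeriv (ha : PolyGeomBounded R a) (j : ℕ) {z : ℂ}
    (hz : ‖z‖ < R⁻¹) :
    HasSum (fun k => (k.descFactorial j : ℂ) * a k * z ^ k)
      (z ^ j * iteratedDeriv j (powerSeriesSum a) z) := by
  rw [iteratedDeriv_powerSeriesSum ha j hz]
  exact hasSum_descFactorial_mul_pow ((ha.iterate_derivCoeff j).summable hz)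

theorem hasSum_two_mul_add_one_cube_mul_pow (ha : PolyGeomBounded R a) {z : ℂ}
    (hz : ‖z‖ < R⁻¹) :
    HasSum (fun k : ℕ => 8 * (2 * (k : ℂ) + 1) ^ 3 * a k * z ^ k)
      (64 * z ^ 3 * iteratedDeriv 3 (powerSeriesSum a) z +
        288 * z ^ 2 * iteratedDeriv 2 (powerSeriesSum a) z +
        208 * z * deriv (powerSeriesSum a) z + 8 * powerSeriesSum a z) := by
  have h (j : ℕ) := hasSum_descFactorial_mul_pow_iteratedDeriv ha j hz
  have hs := (((h 3).mul_left 64).add ((h 2).mul_left 288)).add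
    (((h 1).mul_left 208).add ((h 0).mul_left 8))
  rw [iteratedDeriv_one, iteratedDeriv_zero] at hs
  convert! hs using 1
  · funext k
    simp only [← descPochhammer_eval_eq_descFactorial, descPochhammer_succ_eval,
      descPochhammer_zero, Polynomial.eval_one]
    push_cast
    ring
  · ring

theorem hasSum_add_one_cube_mul_succ_mul_pow (ha : PolyGeomBounded R a) {z : ℂ}
    (hz : ‖z‖ < R⁻¹) :
    HasSum (fun k : ℕ => ((k : ℂ) + 1) ^ 3 * a (k + 1) * z ^ k)
      (z ^ 2 * iteratedDeriv 3 (powerSeriesSum a) z +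
        3 * z * iteratedDeriv 2 (powerSeriesSum a) z + deriv (powerSeriesSum a) z) := by
  have h (j : ℕ) :
      HasSum (fun k => (k.descFactorial j : ℂ) * derivCoeff a k * z ^ k)
        (z ^ j * iteratedDeriv (j + 1) (powerSeriesSum a) z) := by
    rw [iteratedDeriv_powerSeriesSum ha (j + 1) hz, Function.iterate_succ_apply]
    exact hasSum_descFactorial_mul_pow ((ha.derivCoeff.iterate_derivCoeff j).summable hz)
  have hs := ((h 2).add ((h 1).mul_left 3)).add (h 0)
  rw [zero_add, iteratedDeriv_one] at hs
  convert! hs using 1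
  · funext k
    simp only [← descPochhammer_eval_eq_descFactorial, descPochhammer_succ_eval,
      descPochhammer_zero, Polynomial.eval_one, derivCoeff]
    push_cast
    ring
  · ring

end

noncomputable def uCoeff (k : ℕ) : ℂ := (pochC (1/2) k / (Nat.factorial k : ℂ)) ^ 3 * 64 ^ k

theorem u_eq_powerSeriesSum : u = powerSeriesSum uCoeff :=
  funext fun μ => tsum_congr fun k => by rw [uCoeff, mul_pow, mul_assoc]

theorem norm_pochC_half_le (k : ℕ) : ‖pochC (1/2) k‖ ≤ k.factorial := by
  rw [pochC, norm_prod, ← Finset.prod_range_add_one_eq_factorial, Nat.cast_prod]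
  refine Finset.prod_le_prod (fun _ _ => norm_nonneg _) fun i _ => ?_
  calc ‖(1/2 : ℂ) + i‖ ≤ ‖(1/2 : ℂ)‖ + ‖(i : ℂ)‖ := norm_add_le _ _
    _ ≤ ((i + 1 : ℕ) : ℝ) := by push_cast; norm_num; linarith

theorem uCoeff_polyGeomBounded : PolyGeomBounded 64 uCoeff := by
  refine ⟨1, 0, fun k => ?_⟩
  have hratio : ‖pochC (1/2) k / (Nat.factorial k : ℂ)‖ ≤ 1 := by
    rw [norm_div, Complex.norm_natCast]
    exact div_le_one_of_le₀ (norm_pochC_half_le k) (Nat.cast_nonneg _)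
  rw [uCoeff, norm_mul, norm_pow, norm_pow, Complex.norm_ofNat]
  simpa using mul_le_of_le_one_left (by positivity : (0 : ℝ) ≤ 64 ^ k)
    (pow_le_one₀ (norm_nonneg _) hratio)

theorem uCoeff_succ (k : ℕ) :
    ((k : ℂ) + 1) ^ 3 * uCoeff (k + 1) = 8 * (2 * k + 1) ^ 3 * uCoeff k := by
  have hk : (k : ℂ) + 1 ≠ 0 := Nat.cast_add_one_ne_zero k
  have hfac : (k.factorial : ℂ) ≠ 0 := Nat.cast_ne_zero.2 k.factorial_ne_zero
  rw [uCoeff, uCoeff, pochC, Finset.prod_range_succ, ← pochC, Nat.factorial_succ]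
  push_cast
  field_simp
  ring

theorem stmt18 (μ : ℂ) (hμ : ‖μ‖ < 1/64) :
    μ ^ 2 * (64 * μ - 1) * iteratedDeriv 3 u μ +
      μ * (288 * μ - 3) * iteratedDeriv 2 u μ +
      (208 * μ - 1) * deriv u μ + 8 * u μ = 0 := by
  have hμ' : ‖μ‖ < (64 : ℝ)⁻¹ := by simpa using hμ
  have hθ := hasSum_add_one_cube_mul_succ_mul_pow uCoeff_polyGeomBounded hμ'
  have hθ' := hasSum_two_mul_add_one_cube_mul_pow uCoeff_polyGeomBounded hμ'
  simp only [← uCoeff_succ] at hθ'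
  rw [u_eq_powerSeriesSum]
  linear_combination hθ'.unique hθ
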